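/- arXiv:1903.06363 — 5 statements merged into one kernel-verified Lean document; each statement's English description precedes it below -/
import Mathlib

section
/- Let q ∈ k with q ≠ -1, let M and N be left modules over the Hecke algebra H_n(q), and let φ : N → M be a k-linear map. Then the following are equivalent: (a) for each i = 1,...,n-1 there exists a k-linear map ψ_i : N → M with φ = ψ_i∘T_i - T_i∘ψ_i; (b) φ∘T_i = (q-1-T_i)∘φ for all i, i.e. φ is a module homomorphism from N to the twist of M by the automorphism T_i ↦ q-1-T_i. -/
noncomputable section

variable {k : Type} [Field k] {n : ℕ}

/-- A family of operators `T i` on `M` makes `M` a left module over the Hecke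
algebra `H_{n+1}(q)` of type `A_n` (generators indexed by `Fin n`): the braid
relations, commutation of distant generators, and `(T_i - q)(T_i + 1) = 0`. -/
def IsHeckeRep {M : Type} [AddCommGroup M] [Module k M] (q : k)
    (T : Fin n → Module.End k M) : Prop :=
  (∀ i j : Fin n, ((i : ℕ) + 1 = j ∨ (j : ℕ) + 1 = i) →
      T i * T j * T i = T j * T i * T j) ∧
  (∀ i j : Fin n, ((i : ℕ) + 1 < j ∨ (j : ℕ) + 1 < i) → T i * T j = T j * T i) ∧
  (∀ i : Fin n, (T i - q • 1) * (T i + 1) = 0)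

/-- The quadratic relation pointwise: `T (T x) = (q-1) • T x + q • x`. -/
lemma heckeQuad {M : Type} [AddCommGroup M] [Module k M] {q : k}
    {T : Fin n → Module.End k M} (hT : IsHeckeRep q T) (i : Fin n) (x : M) :
    T i (T i x) = (q - 1) • T i x + q • x := by
  have h2 : ((T i - q • 1) * (T i + 1)) x = (0 : Module.End k M) x := by
    rw [hT.2.2 i]
  simp only [Module.End.mul_apply, LinearMap.add_apply, LinearMap.sub_apply,
    LinearMap.smul_apply, Module.End.one_apply, LinearMap.zero_apply, map_add] at h2
  linear_combination (norm := module) h2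

/-- for `q ≠ -1`, left `H_n(q)`-modules `M`, `N` and a `k`-linear
map `φ : N → M`, the following are equivalent: (a) for each `i` there is a
`k`-linear `ψᵢ : N → M` with `φ = ψᵢ ∘ Tᵢ - Tᵢ ∘ ψᵢ`; (b) `φ ∘ Tᵢ = (q-1-Tᵢ) ∘ φ`
for all `i`, i.e. `φ` is a module homomorphism from `N` to the twist of `M` by
the automorphism `Tᵢ ↦ q - 1 - Tᵢ`. -/
theorem hecke_commutator_iff_twisted_hom {M N : Type}
    [AddCommGroup M] [Module k M] [AddCommGroup N] [Module k N]
    (q : k) (hq : q ≠ -1)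
    (TM : Fin n → Module.End k M) (TN : Fin n → Module.End k N)
    (hM : IsHeckeRep q TM) (hN : IsHeckeRep q TN) (φ : N →ₗ[k] M) :
    (∀ i : Fin n, ∃ ψ : N →ₗ[k] M, φ = ψ ∘ₗ TN i - TM i ∘ₗ ψ) ↔
      (∀ i : Fin n, φ ∘ₗ TN i = ((q - 1) • LinearMap.id - TM i) ∘ₗ φ) := by
  have hq1 : q + 1 ≠ 0 := by
    intro h; exact hq (eq_neg_of_add_eq_zero_left h)
  constructor
  · intro ha i
    obtain ⟨ψ, hψ⟩ := ha i
    have hφ : ∀ y, φ y = ψ (TN i y) - TM i (ψ y) := by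
      intro y; rw [hψ]; simp
    ext x
    simp only [LinearMap.comp_apply, LinearMap.sub_apply, LinearMap.smul_apply,
      LinearMap.id_apply]
    rw [hφ (TN i x), hφ x, heckeQuad hN i x]
    simp only [map_add, map_smul, map_sub]
    rw [heckeQuad hM i (ψ x)]
    module
  · intro hb i
    have hb' : ∀ y, φ (TN i y) = (q - 1) • φ y - TM i (φ y) := by
      intro y
      have := congrArg (fun f => f y) (hb i)
      simpa using this
    refine ⟨((q + 1) ^ 2)⁻¹ • ((q - 1) • φ - (2 : k) • (TM i ∘ₗ φ)), ?_⟩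
    ext x
    simp only [LinearMap.comp_apply, LinearMap.sub_apply, LinearMap.smul_apply]
    rw [hb' x]
    simp only [map_smul, map_sub, map_add]
    rw [heckeQuad hM i (φ x)]
    match_scalars <;> field_simp <;> ring
end
end

section
/- Let q ∈ k be arbitrary, M and N left H_n(q)-modules, and φ : N → M a k-linear map. If for each i = 1,...,n-1 there exists a k-linear map ψ_i : N → M with φ = ψ_i∘T_i - T_i∘ψ_i, then φ∘T_i = (q-1-T_i)∘φ for all i. -/
noncomputable section

variable {k : Type} [Field k] {n : ℕ}

/-- for arbitrary `q`, left `H_n(q)`-modules `M`, `N` and a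
`k`-linear map `φ : N → M`: if for each `i` there is a `k`-linear `ψᵢ : N → M`
with `φ = ψᵢ ∘ Tᵢ - Tᵢ ∘ ψᵢ`, then `φ ∘ Tᵢ = (q-1-Tᵢ) ∘ φ` for all `i`. -/
theorem hecke_commutator_implies_twisted_hom {M N : Type}
    [AddCommGroup M] [Module k M] [AddCommGroup N] [Module k N]
    (q : k)
    (TM : Fin n → Module.End k M) (TN : Fin n → Module.End k N)
    (hM : IsHeckeRep q TM) (hN : IsHeckeRep q TN) (φ : N →ₗ[k] M)
    (h : ∀ i : Fin n, ∃ ψ : N →ₗ[k] M, φ = ψ ∘ₗ TN i - TM i ∘ₗ ψ) :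
    ∀ i : Fin n, φ ∘ₗ TN i = ((q - 1) • LinearMap.id - TM i) ∘ₗ φ := by
  intro i
  obtain ⟨ψ, hψ⟩ := h i
  -- quadratic relations pointwise
  have hMq : ∀ x : M, TM i (TM i x) = (q - 1) • TM i x + q • x := by
    intro x
    have := congrArg (fun f : Module.End k M => f x) (hM.2.2 i)
    simp only [Module.End.mul_apply, LinearMap.sub_apply, LinearMap.add_apply,
      LinearMap.smul_apply, Module.End.one_apply, LinearMap.zero_apply,
      map_add, map_sub, map_smul] at this
    have h2 : TM i (TM i x) + TM i x - (q • TM i x + q • x) = 0 := by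
      linear_combination (norm := module) this
    linear_combination (norm := module) h2
  have hNq : ∀ x : N, TN i (TN i x) = (q - 1) • TN i x + q • x := by
    intro x
    have := congrArg (fun f : Module.End k N => f x) (hN.2.2 i)
    simp only [Module.End.mul_apply, LinearMap.sub_apply, LinearMap.add_apply,
      LinearMap.smul_apply, Module.End.one_apply, LinearMap.zero_apply,
      map_add, map_sub, map_smul] at this
    have h2 : TN i (TN i x) + TN i x - (q • TN i x + q • x) = 0 := by
      linear_combination (norm := module) this
    linear_combination (norm := module) h2
  ext x
  have hφ : ∀ y : N, φ y = ψ (TN i y) - TM i (ψ y) := by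
    intro y; rw [hψ]; simp
  simp only [LinearMap.comp_apply, LinearMap.sub_apply, LinearMap.smul_apply,
    LinearMap.id_apply]
  rw [hφ (TN i x), hφ x, hNq x]
  simp only [map_add, map_smul, map_sub]
  rw [hMq (ψ x)]
  module

end
end

section
/- Assume char k ≠ 2 and let q ∈ k satisfy q² = -1. Let V be 2-dimensional with basis x, y, and let A be the algebra k⟨x,y⟩/(y² - qx², xy - qyx). Then xy² = 0 in A, the third graded component A_3 is zero, and the Hilbert series of A is 1 + 2t + 2t². -/
noncomputable section

variable (k : Type) [Field k] (q : k)

/-- The defining relations `y² = q x²` and `x y = q y x` of the algebra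
`A = k⟨x,y⟩/(y² - qx², xy - qyx)`, with `x` and `y` the generators indexed by
`false` and `true`. -/
inductive ExRel : FreeAlgebra k Bool → FreeAlgebra k Bool → Prop
  | rel1 : ExRel (FreeAlgebra.ι k true * FreeAlgebra.ι k true)
      (algebraMap k _ q * (FreeAlgebra.ι k false * FreeAlgebra.ι k false))
  | rel2 : ExRel (FreeAlgebra.ι k false * FreeAlgebra.ι k true)
      (algebraMap k _ q * (FreeAlgebra.ι k true * FreeAlgebra.ι k false))

/-- The algebra `A = k⟨x,y⟩/(y² - qx², xy - qyx)`. -/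
abbrev ExAlg : Type := RingQuot (ExRel k q)

/-- The generator `x` of `A`. -/
def genX : ExAlg k q := RingQuot.mkAlgHom k (ExRel k q) (FreeAlgebra.ι k false)

/-- The generator `y` of `A`. -/
def genY : ExAlg k q := RingQuot.mkAlgHom k (ExRel k q) (FreeAlgebra.ι k true)

/-- The `n`-th graded component of `A`: the span of all products of `n`
generators. -/
def ExGrade (m : ℕ) : Submodule k (ExAlg k q) :=
  Submodule.span k
    {a | ∃ l : List Bool, l.length = m ∧
      a = (l.map fun b => if b then genY k q else genX k q).prod}

/-! When `t² = -1`, evaluating `x y y` and `y y y` in two ways with the relations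
`y² = t x²`, `x y = t y x` gives `(t - t³) x³ = 0` and `(t - t³) y x² = 0`; since
`t - t³ = 2t ≠ 0`, both monomials vanish, and the relations make every other monomial of degree 3
a multiple of one of them. In degree 2 the relations leave only `x²` and `y x`. That these, and
`x`, `y`, are linearly independent is seen in the left regular representation of `A` on the
basis `1, x, y, x², y x`. -/
section QuadraticRelations

variable {K M : Type*} [Field K] [AddCommGroup M] [Module K M] {t : K}

theorem eq_zero_of_smul_eq_pow_three_smul (h2 : (2 : K) ≠ 0) (ht : t ^ 2 = -1) {a : M}
    (h : t • a = t ^ 3 • a) : a = 0 := by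
  have ht0 : t ≠ 0 := by rintro rfl; norm_num at ht
  have : (2 * t) • a = 0 := by
    rw [show 2 * t = t - t ^ 3 by linear_combination t * ht, sub_smul, h, sub_self]
  exact (smul_eq_zero.mp this).resolve_left (mul_ne_zero h2 ht0)

variable {A : Type*} [Ring A] [Algebra K A] {x y : A}

theorem x_mul_x_mul_x_eq_zero (h2 : (2 : K) ≠ 0) (ht : t ^ 2 = -1)
    (hyy : y * y = t • (x * x)) (hxy : x * y = t • (y * x)) : x * (x * x) = 0 := by
  refine eq_zero_of_smul_eq_pow_three_smul h2 ht ?_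
  calc t • (x * (x * x)) = x * (y * y) := by rw [hyy, mul_smul_comm]
    _ = (x * y) * y := (mul_assoc _ _ _).symm
    _ = t ^ 3 • (x * (x * x)) := by
      rw [hxy, smul_mul_assoc, mul_assoc, hxy, mul_smul_comm, ← mul_assoc, hyy, smul_mul_assoc,
        smul_smul, smul_smul, mul_assoc _ x x, ← pow_three']

theorem y_mul_x_mul_x_eq_zero (h2 : (2 : K) ≠ 0) (ht : t ^ 2 = -1)
    (hyy : y * y = t • (x * x)) (hxy : x * y = t • (y * x)) : y * (x * x) = 0 := by
  refine eq_zero_of_smul_eq_pow_three_smul h2 ht ?_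
  calc t • (y * (x * x)) = y * (y * y) := by rw [hyy, mul_smul_comm]
    _ = (y * y) * y := (mul_assoc _ _ _).symm
    _ = t ^ 3 • (y * (x * x)) := by
      rw [hyy, smul_mul_assoc, mul_assoc, hxy, mul_smul_comm, ← mul_assoc, hxy, smul_mul_assoc,
        smul_smul, smul_smul, mul_assoc _ x x, ← pow_three']

theorem mul_mul_eq_zero_of_relations (h2 : (2 : K) ≠ 0) (ht : t ^ 2 = -1)
    (hyy : y * y = t • (x * x)) (hxy : x * y = t • (y * x)) (a b c : Bool) :
    (if a then y else x) * ((if b then y else x) * (if c then y else x)) = 0 := by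
  have hxxx := x_mul_x_mul_x_eq_zero h2 ht hyy hxy
  have hyxx := y_mul_x_mul_x_eq_zero h2 ht hyy hxy
  have hxyx : x * (y * x) = 0 := by
    rw [← mul_assoc, hxy, smul_mul_assoc, mul_assoc, hyxx, smul_zero]
  have hyyx : y * (y * x) = 0 := by
    rw [← mul_assoc, hyy, smul_mul_assoc, mul_assoc, hxxx, smul_zero]
  cases a <;> cases b <;> cases c <;> simp only [Bool.false_eq_true, if_true, if_false]
  · exact hxxx
  · rw [hxy, mul_smul_comm, hxyx, smul_zero]
  · exact hxyx
  · rw [hyy, mul_smul_comm, hxxx, smul_zero]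
  · exact hyxx
  · rw [hxy, mul_smul_comm, hyyx, smul_zero]
  · exact hyyx
  · rw [hyy, mul_smul_comm, hyxx, smul_zero]

end QuadraticRelations

/-- Left multiplication by `x` on `A`, in the basis `1, x, y, x², y x`; `matY` is that by `y`. -/
def matX : Matrix (Fin 5) (Fin 5) k :=
  !![0, 0, 0, 0, 0; 1, 0, 0, 0, 0; 0, 0, 0, 0, 0; 0, 1, 0, 0, 0; 0, 0, q, 0, 0]

def matY : Matrix (Fin 5) (Fin 5) k :=
  !![0, 0, 0, 0, 0; 0, 0, 0, 0, 0; 1, 0, 0, 0, 0; 0, 0, q, 0, 0; 0, 1, 0, 0, 0]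

theorem matY_mul_matY : matY k q * matY k q = q • (matX k q * matX k q) := by
  ext i j
  fin_cases i <;> fin_cases j <;> simp [matX, matY, Matrix.mul_apply, Fin.sum_univ_five]

theorem matX_mul_matY : matX k q * matY k q = q • (matY k q * matX k q) := by
  ext i j
  fin_cases i <;> fin_cases j <;> simp [matX, matY, Matrix.mul_apply, Fin.sum_univ_five]

def toMatrix : ExAlg k q →ₐ[k] Matrix (Fin 5) (Fin 5) k :=
  RingQuot.liftAlgHom k
    ⟨FreeAlgebra.lift k fun b => if b then matY k q else matX k q, by
      rintro _ _ (_ | _) <;>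
        simp only [map_mul, map_smul, FreeAlgebra.lift_ι_apply, if_true, if_false,
          Bool.false_eq_true, ← Algebra.smul_def, matY_mul_matY, matX_mul_matY]⟩

@[simp] theorem toMatrix_genX : toMatrix k q (genX k q) = matX k q := by
  simp [toMatrix, genX]

@[simp] theorem toMatrix_genY : toMatrix k q (genY k q) = matY k q := by
  simp [toMatrix, genY]

theorem genY_mul_genY : genY k q * genY k q = q • (genX k q * genX k q) := by
  simpa [genX, genY, Algebra.smul_def] using
    RingQuot.mkAlgHom_rel k (ExRel.rel1 (k := k) (q := q))

theorem genX_mul_genY : genX k q * genY k q = q • (genY k q * genX k q) := by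
  simpa [genX, genY, Algebra.smul_def] using
    RingQuot.mkAlgHom_rel k (ExRel.rel2 (k := k) (q := q))

instance : Nontrivial (ExAlg k q) := (toMatrix k q).toRingHom.domain_nontrivial

theorem linearIndependent_of_toMatrix_col_zero {n : ℕ} (f : Fin n → ExAlg k q)
    (σ : Fin n → Fin 5) (hσ : Function.Injective σ)
    (hf : ∀ i j, toMatrix k q (f i) j 0 = (Pi.single (σ i) 1 : Fin 5 → k) j) :
    LinearIndependent k f := by
  let col : ExAlg k q →ₗ[k] Fin 5 → k :=
    LinearMap.pi (fun j => Matrix.entryLinearMap k k j 0) ∘ₗ (toMatrix k q).toLinearMap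
  refine LinearIndependent.of_comp col ?_
  convert (Pi.linearIndependent_single_one (Fin 5) k).comp σ hσ
  ext i j
  exact hf i j

theorem linearIndependent_genX_genY : LinearIndependent k ![genX k q, genY k q] := by
  refine linearIndependent_of_toMatrix_col_zero k q _ ![1, 2] (by decide) ?_
  intro i j
  fin_cases i <;> fin_cases j <;> simp [matX, matY]

theorem linearIndependent_genX_sq_genY_mul_genX :
    LinearIndependent k ![genX k q * genX k q, genY k q * genX k q] := by
  refine linearIndependent_of_toMatrix_col_zero k q _ ![3, 4] (by decide) ?_
  intro i j
  fin_cases i <;> fin_cases j <;> simp [matX, matY, Matrix.mul_apply, Fin.sum_univ_five]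

theorem exGrade_zero : ExGrade k q 0 = Submodule.span k {1} := by
  rw [ExGrade]
  congr 1
  refine Set.ext fun a => ?_
  simp [List.length_eq_zero_iff]

theorem exGrade_one : ExGrade k q 1 = Submodule.span k {genX k q, genY k q} := by
  rw [ExGrade]
  congr 1
  refine Set.ext fun a => ?_
  simp only [List.length_eq_one_iff, Set.mem_ofPred_eq, Set.mem_insert_iff, Set.mem_singleton_iff]
  constructor
  · rintro ⟨_, ⟨b, rfl⟩, rfl⟩
    cases b <;> simp
  · rintro (rfl | rfl)
    exacts [⟨[false], ⟨false, rfl⟩, by simp⟩, ⟨[true], ⟨true, rfl⟩, by simp⟩]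

theorem exGrade_two :
    ExGrade k q 2 = Submodule.span k {genX k q * genX k q, genY k q * genX k q} := by
  have hwords : {a | ∃ l : List Bool, l.length = 2 ∧
      a = (l.map fun b => if b then genY k q else genX k q).prod} =
      {genX k q * genY k q, genY k q * genY k q, genX k q * genX k q, genY k q * genX k q} := by
    ext a
    simp only [List.length_eq_two, Set.mem_ofPred_eq, Set.mem_insert_iff, Set.mem_singleton_iff]
    constructor
    · rintro ⟨_, ⟨b, c, rfl⟩, rfl⟩
      cases b <;> cases c <;> simp
    · rintro (rfl | rfl | rfl | rfl)
      exacts [⟨[false, true], ⟨_, _, rfl⟩, by simp⟩, ⟨[true, true], ⟨_, _, rfl⟩, by simp⟩,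
        ⟨[false, false], ⟨_, _, rfl⟩, by simp⟩, ⟨[true, false], ⟨_, _, rfl⟩, by simp⟩]
  rw [ExGrade, hwords, Submodule.span_insert_eq_span, Submodule.span_insert_eq_span]
  · rw [genY_mul_genY]
    exact Submodule.smul_mem _ _ (Submodule.subset_span (by simp))
  · rw [genX_mul_genY]
    exact Submodule.smul_mem _ _ (Submodule.subset_span (by simp))

theorem exGrade_eq_bot (h2 : (2 : k) ≠ 0) (hq : q ^ 2 = -1) {m : ℕ} (hm : 3 ≤ m) :
    ExGrade k q m = ⊥ := by
  rw [ExGrade, Submodule.span_eq_bot]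
  rintro _ ⟨l, hl, rfl⟩
  rcases l with _ | ⟨a, _ | ⟨b, _ | ⟨c, l⟩⟩⟩
  · simp at hl; omega
  · simp at hl; omega
  · simp at hl; omega
  simp only [List.map_cons, List.prod_cons, ← mul_assoc]
  rw [mul_assoc (if a then _ else _),
    mul_mul_eq_zero_of_relations h2 hq (genY_mul_genY k q) (genX_mul_genY k q), zero_mul]

theorem finrank_exGrade_zero : Module.finrank k (ExGrade k q 0) = 1 := by
  rw [exGrade_zero, finrank_span_singleton one_ne_zero]

theorem finrank_exGrade_one : Module.finrank k (ExGrade k q 1) = 2 := by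
  rw [exGrade_one, ← Matrix.range_cons_cons_empty,
    finrank_span_eq_card (linearIndependent_genX_genY k q), Fintype.card_fin]

theorem finrank_exGrade_two : Module.finrank k (ExGrade k q 2) = 2 := by
  rw [exGrade_two, ← Matrix.range_cons_cons_empty,
    finrank_span_eq_card (linearIndependent_genX_sq_genY_mul_genX k q), Fintype.card_fin]

/-- if `char k ≠ 2` and `q² = -1`, then in
`A = k⟨x,y⟩/(y² - qx², xy - qyx)` one has `x y² = 0`, the third graded
component vanishes, and the Hilbert series of `A` is `1 + 2t + 2t²`. -/
theorem example_algebra_hilbert_series (h2 : (2 : k) ≠ 0) (hq : q ^ 2 = -1) :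
    genX k q * genY k q * genY k q = 0 ∧
    ExGrade k q 3 = ⊥ ∧
    Module.finrank k (ExGrade k q 0) = 1 ∧
    Module.finrank k (ExGrade k q 1) = 2 ∧
    Module.finrank k (ExGrade k q 2) = 2 ∧
    (∀ m : ℕ, 3 ≤ m → ExGrade k q m = ⊥) := by
  refine ⟨?_, exGrade_eq_bot k q h2 hq le_rfl, finrank_exGrade_zero k q, finrank_exGrade_one k q,
    finrank_exGrade_two k q, fun m hm => exGrade_eq_bot k q h2 hq hm⟩
  simpa [mul_assoc] using
    mul_mul_eq_zero_of_relations h2 hq (genY_mul_genY k q) (genX_mul_genY k q) false true true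

end
end

section
/- Let q ∈ k, q ≠ 0, and let M = H_n(q) ⊗_{H_λ} k(χ) be the H_n(q)-module induced from a 1-dimensional representation χ of a parabolic subalgebra H_λ, with standard basis {v_σ = T_σ·c : σ ∈ D_λ} indexed by distinguished coset representatives. Then for each i, the kernel of (T_i - q) acting on M is spanned by the elements v_{τ_iσ} + v_σ for σ ∈ A_i(λ) together with the elements v_σ for σ ∈ B_i(λ) with χ_σ(T_i) = q, where A_i(λ) = {σ ∈ D_λ : τ_iσ ∈ D_λ, τ_iσ > σ} and B_i(λ) = {σ ∈ D_λ : σ^{-1}τ_iσ ∈ B_λ}, and χ_σ(T_i) = χ(T_{σ^{-1}(i)}). -/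
noncomputable section
open Classical

variable (k : Type) [Field k] (N : ℕ)

/-- The basic transposition `τ_i = (i, i+1)` in `S_{N+1}`. -/
def tau (i : Fin N) : Equiv.Perm (Fin (N + 1)) := Equiv.swap i.castSucc i.succ

/-- The Coxeter length of a permutation. -/
def len (σ : Equiv.Perm (Fin (N + 1))) : ℕ :=
  sInf {m | ∃ l : List (Fin N), l.length = m ∧ (l.map (tau N)).prod = σ}

/-- The Young subgroup `S_λ` generated by the basic transpositions indexed by `B`. -/
def youngSubgroup (B : Set (Fin N)) : Subgroup (Equiv.Perm (Fin (N + 1))) :=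
  Subgroup.closure (tau N '' B)

/-- `σ` is a distinguished (minimal length) left coset representative of `σ S_λ`. -/
def IsDistL (B : Set (Fin N)) (σ : Equiv.Perm (Fin (N + 1))) : Prop :=
  ∀ s ∈ youngSubgroup N B, len N σ ≤ len N (σ * s)

/-- The set `D_λ` of distinguished left coset representatives. -/
def Dset (B : Set (Fin N)) : Type := {σ : Equiv.Perm (Fin (N + 1)) // IsDistL N B σ}

/-- `χ : Fin N → k` restricted to `B` defines a one-dimensional representation of
the parabolic subalgebra `H_λ`: the values satisfy the quadratic relation and are
compatible with the braid relations. -/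
def IsOneDimRep (q : k) (B : Set (Fin N)) (χ : Fin N → k) : Prop :=
  (∀ i ∈ B, (χ i - q) * (χ i + 1) = 0) ∧
  (∀ i ∈ B, ∀ j ∈ B, ((i : ℕ) + 1 = j ∨ (j : ℕ) + 1 = i) →
    χ i * χ j * χ i = χ j * χ i * χ j)

/-- The underlying vector space of the induced module `H_n(q) ⊗_{H_λ} k(χ)`,
with standard basis `{T_σ c : σ ∈ D_λ}` indexed by distinguished coset
representatives. -/
def IndM (B : Set (Fin N)) : Type := Dset N B →₀ k

instance (B : Set (Fin N)) : AddCommGroup (IndM k N B) :=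
  inferInstanceAs (AddCommGroup (Dset N B →₀ k))

instance (B : Set (Fin N)) : Module k (IndM k N B) :=
  inferInstanceAs (Module k (Dset N B →₀ k))

/-- The action of the generator `T_i` on the standard basis vector `v_σ` of the
induced module `H_n(q) ⊗_{H_λ} k(χ)`:
`T_i v_σ = v_{τ_iσ}` if `σ ∈ A_i(λ)`;
`T_i v_σ = (q-1) v_σ + q v_{τ_iσ}` if `τ_i σ ∈ A_i(λ)`, `τ_iσ < σ`;
`T_i v_σ = χ_σ(T_i) v_σ = χ(T_j) v_σ` with `τ_j = σ⁻¹τ_iσ ∈ B_λ` if `σ ∈ B_i(λ)`. -/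
def indAct (q : k) (B : Set (Fin N)) (χ : Fin N → k) (i : Fin N) (σ : Dset N B) :
    IndM k N B :=
  if h : ∃ j, j ∈ B ∧ σ.1⁻¹ * tau N i * σ.1 = tau N j then
    χ h.choose • Finsupp.single σ 1
  else if hD : IsDistL N B (tau N i * σ.1) then
    (if len N σ.1 < len N (tau N i * σ.1) then
      Finsupp.single ⟨tau N i * σ.1, hD⟩ 1
    else
      (q - 1) • Finsupp.single σ 1 + q • Finsupp.single ⟨tau N i * σ.1, hD⟩ 1)
  else 0

/-- The operator by which the generator `T_i` acts on the induced module
`H_n(q) ⊗_{H_λ} k(χ)`. -/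
def indT (q : k) (B : Set (Fin N)) (χ : Fin N → k) (i : Fin N) :
    Module.End k (IndM k N B) :=
  (Finsupp.lift (IndM k N B) k (Dset N B)) (indAct k N q B χ i)

/-! The coefficient of `v_ρ` in `T_i v` involves only `v_ρ` and `v_{τ_i ρ}`, so `T_i v = q v` can be
read off coordinatewise. For `ρ ∈ B_i(λ)` (then `τ_i ρ = ρ τ_j` is not distinguished) it says
`(χ_ρ(T_i) - q) v_ρ = 0`; when `ρ` and `τ_i ρ` are both distinguished it says `v_{τ_i ρ} = v_ρ`
(dividing by `q` when `ρ` is the shorter one); otherwise `T_i` sends nothing to `v_ρ` and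
`q v_ρ = 0`. Hence a kernel vector agrees with a multiple of a generator near any point of its
support, and subtracting that multiple shrinks the support. -/

/-- Each `g` lets one subtract `v ρ • g` from `v`, killing the coordinate `ρ` without enlarging
the support; induct on the size of the support. -/
theorem le_span_of_exists_mem_agree {X R : Type*} [Ring R] {W : Submodule R (X →₀ R)}
    {S : Set (X →₀ R)} (hS : S ⊆ W)
    (h : ∀ v ∈ W, ∀ ρ, v ρ ≠ 0 → ∃ g ∈ S, g ρ = 1 ∧ ∀ x, g x ≠ 0 → v x = v ρ * g x) :
    W ≤ Submodule.span R S := by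
  intro v hv
  induction hcard : v.support.card using Nat.strong_induction_on generalizing v with
  | _ n ih =>
  rcases v.support.eq_empty_or_nonempty with h0 | ⟨ρ, hρ⟩
  · rw [Finsupp.support_eq_empty.mp h0]
    exact zero_mem _
  obtain ⟨g, hgS, hgρ, hgv⟩ := h v hv ρ (Finsupp.mem_support_iff.mp hρ)
  have hsub : (v - v ρ • g).support ⊆ v.support.erase ρ := by
    intro x hx
    rw [Finsupp.mem_support_iff, Finsupp.sub_apply, Finsupp.smul_apply, smul_eq_mul] at hx
    rw [Finset.mem_erase, Finsupp.mem_support_iff]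
    refine ⟨fun hxρ ↦ hx (by rw [hxρ, hgρ, mul_one, sub_self]), fun hvx ↦ ?_⟩
    by_cases hgx : g x = 0
    · exact hx (by rw [hvx, hgx, mul_zero, sub_zero])
    · exact hx (by rw [← hgv x hgx, sub_self])
  have hlt : (v - v ρ • g).support.card < n :=
    hcard ▸ (Finset.card_le_card hsub).trans_lt (Finset.card_erase_lt_of_mem hρ)
  have hw := ih _ hlt (W.sub_mem hv (W.smul_mem _ (hS hgS))) rfl
  simpa using add_mem hw (Submodule.smul_mem _ (v ρ) (Submodule.subset_span hgS))

section Permutations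

variable {N}

lemma tau_mul_tau (i : Fin N) : tau N i * tau N i = 1 := Equiv.swap_mul_self _ _

lemma tau_mul_tau_mul (i : Fin N) (σ : Equiv.Perm (Fin (N + 1))) :
    tau N i * (tau N i * σ) = σ := by
  rw [← mul_assoc, tau_mul_tau, one_mul]

lemma tau_injective : Function.Injective (tau N) := by
  intro i j h
  have h1 : tau N j i.castSucc = i.succ := by
    rw [← h]; exact Equiv.swap_apply_left _ _
  unfold tau at h1
  rw [Equiv.swap_apply_def] at h1
  split_ifs at h1 <;> simp only [Fin.ext_iff, Fin.val_castSucc, Fin.val_succ] at * <;> omega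

lemma exists_list_prod_map_tau (σ : Equiv.Perm (Fin (N + 1))) :
    ∃ l : List (Fin N), (l.map (tau N)).prod = σ := by
  have hσ : σ ∈ Submonoid.closure (Set.range (tau N)) := by
    change σ ∈ Submonoid.closure (Set.range fun i : Fin N ↦ Equiv.swap i.castSucc i.succ)
    rw [Equiv.Perm.mclosure_swap_castSucc_succ]; trivial
  induction hσ using Submonoid.closure_induction with
  | mem _ h => obtain ⟨i, rfl⟩ := h; exact ⟨[i], by simp⟩
  | one => exact ⟨[], rfl⟩
  | mul _ _ _ _ h₁ h₂ =>
    obtain ⟨l₁, rfl⟩ := h₁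
    obtain ⟨l₂, rfl⟩ := h₂
    exact ⟨l₁ ++ l₂, by simp⟩

lemma exists_list_length_eq_len (σ : Equiv.Perm (Fin (N + 1))) :
    ∃ l : List (Fin N), l.length = len N σ ∧ (l.map (tau N)).prod = σ := by
  obtain ⟨l, hl⟩ := exists_list_prod_map_tau σ
  exact Nat.sInf_mem (s := {m | ∃ l : List (Fin N), l.length = m ∧ (l.map (tau N)).prod = σ})
    ⟨l.length, l, rfl, hl⟩

lemma sign_eq_neg_one_pow_len (σ : Equiv.Perm (Fin (N + 1))) :
    Equiv.Perm.sign σ = (-1) ^ len N σ := by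
  obtain ⟨l, hlen, rfl⟩ := exists_list_length_eq_len σ
  rw [Equiv.Perm.sign_prod_list_swap, List.length_map, hlen]
  simp only [List.mem_map]
  rintro _ ⟨i, -, rfl⟩
  exact ⟨i.castSucc, i.succ, Fin.castSucc_lt_succ.ne, rfl⟩

lemma sign_tau (i : Fin N) : Equiv.Perm.sign (tau N i) = -1 :=
  Equiv.Perm.sign_swap Fin.castSucc_lt_succ.ne

lemma len_tau_mul_ne (i : Fin N) (σ : Equiv.Perm (Fin (N + 1))) :
    len N (tau N i * σ) ≠ len N σ := by
  intro h
  have hsign : Equiv.Perm.sign (tau N i * σ) = Equiv.Perm.sign σ := by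
    rw [sign_eq_neg_one_pow_len, sign_eq_neg_one_pow_len, h]
  rw [map_mul, sign_tau, neg_one_mul] at hsign
  exact neg_units_ne_self _ hsign

end Permutations

/-- `σ⁻¹ τ_i σ` is one of the basic transpositions generating `S_λ`; on `D_λ` this is
membership in `B_i(λ)`. -/
def MemBi (N : ℕ) (B : Set (Fin N)) (i : Fin N) (σ : Equiv.Perm (Fin (N + 1))) : Prop :=
  ∃ j, j ∈ B ∧ σ⁻¹ * tau N i * σ = tau N j

section Induced

variable {k N} {q : k} {B : Set (Fin N)} {χ : Fin N → k} {i : Fin N}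

/-- `IndM` is a type synonym of `Dset N B →₀ k`; reading a vector through this identity lets the
`Finsupp` API apply without instance mismatches. -/
abbrev IndM.toFinsupp (v : IndM k N B) : Dset N B →₀ k := v

lemma not_isDistL_tau_mul_of_memBi {σ : Equiv.Perm (Fin (N + 1))} (hσ : IsDistL N B σ)
    (h : MemBi N B i σ) : ¬ IsDistL N B (tau N i * σ) := by
  obtain ⟨j, hj, hconj⟩ := h
  have hj' : tau N j ∈ youngSubgroup N B := Subgroup.subset_closure ⟨j, hj, rfl⟩
  have hcomm : tau N i * σ = σ * tau N j := by rw [← hconj]; group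
  intro hD
  have h₁ := hσ _ hj'
  have h₂ := hD _ hj'
  rw [hcomm, mul_assoc, tau_mul_tau, mul_one] at h₂
  rw [← hcomm] at h₁ h₂
  exact len_tau_mul_ne i σ (le_antisymm h₂ h₁)

lemma not_memBi_of_val_eq_tau_mul {ρ ρ' : Dset N B} (hρ' : ρ'.1 = tau N i * ρ.1) :
    ¬ MemBi N B i ρ.1 :=
  fun h ↦ not_isDistL_tau_mul_of_memBi ρ.2 h (hρ' ▸ ρ'.2)

lemma indAct_of_memBi (ρ : Dset N B) {j : Fin N} (hj : j ∈ B)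
    (hconj : ρ.1⁻¹ * tau N i * ρ.1 = tau N j) :
    (indAct k N q B χ i ρ).toFinsupp = (χ j • Finsupp.single ρ 1 : Dset N B →₀ k) := by
  have h : MemBi N B i ρ.1 := ⟨j, hj, hconj⟩
  simp only [IndM.toFinsupp, indAct]
  rw [dif_pos (show ∃ j, j ∈ B ∧ _ from h), tau_injective (h.choose_spec.2.symm.trans hconj)]
  rfl

lemma indAct_of_len_lt {ρ ρ' : Dset N B} (hρ' : ρ'.1 = tau N i * ρ.1)
    (hlt : len N ρ.1 < len N ρ'.1) :
    (indAct k N q B χ i ρ).toFinsupp = (Finsupp.single ρ' 1 : Dset N B →₀ k) := by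
  obtain ⟨ρ', hD⟩ := ρ'
  subst hρ'
  simp only [IndM.toFinsupp, indAct]
  rw [dif_neg (show ¬ ∃ j, j ∈ B ∧ _ from not_memBi_of_val_eq_tau_mul (ρ' := ⟨_, hD⟩) rfl),
    dif_pos hD]
  exact if_pos hlt

lemma indAct_of_len_gt {ρ ρ' : Dset N B} (hρ' : ρ'.1 = tau N i * ρ.1)
    (hgt : len N ρ'.1 < len N ρ.1) :
    (indAct k N q B χ i ρ).toFinsupp =
      ((q - 1) • Finsupp.single ρ 1 + q • Finsupp.single ρ' 1 : Dset N B →₀ k) := by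
  obtain ⟨ρ', hD⟩ := ρ'
  subst hρ'
  simp only [IndM.toFinsupp, indAct]
  rw [dif_neg (show ¬ ∃ j, j ∈ B ∧ _ from not_memBi_of_val_eq_tau_mul (ρ' := ⟨_, hD⟩) rfl),
    dif_pos hD]
  exact if_neg hgt.not_gt

lemma indAct_of_not_isDistL {ρ : Dset N B} (hB : ¬ MemBi N B i ρ.1)
    (hD : ¬ IsDistL N B (tau N i * ρ.1)) : (indAct k N q B χ i ρ).toFinsupp = 0 := by
  simp only [IndM.toFinsupp, indAct]
  rw [dif_neg (show ¬ ∃ j, j ∈ B ∧ _ from hB), dif_neg hD]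
  rfl

variable (k) in
def coeff (ρ : Dset N B) : (Dset N B →₀ k) →ₗ[k] k := Finsupp.lapply ρ

lemma coeff_single_self (ρ : Dset N B) (c : k) : coeff k ρ (Finsupp.single ρ c) = c :=
  Finsupp.single_eq_same

lemma coeff_single_of_ne {ρ σ : Dset N B} (h : σ ≠ ρ) (c : k) :
    coeff k ρ (Finsupp.single σ c) = 0 :=
  Finsupp.single_eq_of_ne h.symm

lemma coeff_indT (ρ : Dset N B) (v : Dset N B →₀ k) :
    coeff k ρ (indT k N q B χ i v).toFinsupp =
      ∑ σ ∈ v.support, v σ * coeff k ρ (indAct k N q B χ i σ).toFinsupp := by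
  change coeff k ρ (v.sum fun σ c ↦ c • (indAct k N q B χ i σ).toFinsupp) = _
  simp only [map_finsuppSum, map_smul, smul_eq_mul]
  rfl

lemma ne_of_val_eq_tau_mul {ρ ρ' : Dset N B} (hρ' : ρ'.1 = tau N i * ρ.1) : ρ ≠ ρ' := by
  rintro rfl
  exact len_tau_mul_ne i ρ.1 (congrArg (len N) hρ').symm

lemma val_eq_tau_mul_symm {ρ ρ' : Dset N B} (hρ' : ρ'.1 = tau N i * ρ.1) :
    ρ.1 = tau N i * ρ'.1 := by
  rw [hρ', tau_mul_tau_mul]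

lemma coeff_indAct_of_ne {σ ρ : Dset N B} (h₁ : σ ≠ ρ) (h₂ : ρ.1 ≠ tau N i * σ.1) :
    coeff k ρ (indAct k N q B χ i σ).toFinsupp = 0 := by
  by_cases hB : MemBi N B i σ.1
  · obtain ⟨j, hj, hconj⟩ := hB
    rw [indAct_of_memBi σ hj hconj, map_smul, coeff_single_of_ne h₁, smul_zero]
  by_cases hD : IsDistL N B (tau N i * σ.1)
  · have hσ' : (⟨_, hD⟩ : Dset N B).1 = tau N i * σ.1 := rfl
    have h₃ : (⟨_, hD⟩ : Dset N B) ≠ ρ := fun h ↦ h₂ (h ▸ rfl)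
    rcases (len_tau_mul_ne i σ.1).lt_or_gt with hgt | hlt
    · rw [indAct_of_len_gt hσ' hgt, map_add, map_smul, map_smul, coeff_single_of_ne h₁,
        coeff_single_of_ne h₃, smul_zero, smul_zero, add_zero]
    · rw [indAct_of_len_lt hσ' hlt, coeff_single_of_ne h₃]
  · rw [indAct_of_not_isDistL hB hD, map_zero]

lemma coeff_indT_of_memBi (v : Dset N B →₀ k) (ρ : Dset N B) {j : Fin N} (hj : j ∈ B)
    (hconj : ρ.1⁻¹ * tau N i * ρ.1 = tau N j) :
    coeff k ρ (indT k N q B χ i v).toFinsupp = χ j * v ρ := by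
  rw [coeff_indT, Finset.sum_eq_single ρ, indAct_of_memBi ρ hj hconj, map_smul,
    coeff_single_self, smul_eq_mul, mul_one, mul_comm]
  · intro σ _ hσρ
    have hρσ : ρ.1 ≠ tau N i * σ.1 := fun h ↦
      not_isDistL_tau_mul_of_memBi ρ.2 ⟨j, hj, hconj⟩ (by rw [h, tau_mul_tau_mul]; exact σ.2)
    rw [coeff_indAct_of_ne hσρ hρσ, mul_zero]
  · exact fun h ↦ by rw [Finsupp.notMem_support_iff.mp h, zero_mul]

lemma coeff_indT_of_not_isDistL (v : Dset N B →₀ k) {ρ : Dset N B} (hB : ¬ MemBi N B i ρ.1)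
    (hD : ¬ IsDistL N B (tau N i * ρ.1)) : coeff k ρ (indT k N q B χ i v).toFinsupp = 0 := by
  rw [coeff_indT]
  refine Finset.sum_eq_zero fun σ _ ↦ ?_
  by_cases hσρ : σ = ρ
  · rw [hσρ, indAct_of_not_isDistL hB hD, map_zero, mul_zero]
  · have hρσ : ρ.1 ≠ tau N i * σ.1 := fun h ↦ hD (by rw [h, tau_mul_tau_mul]; exact σ.2)
    rw [coeff_indAct_of_ne hσρ hρσ, mul_zero]

lemma coeff_indT_of_val_eq_tau_mul (v : Dset N B →₀ k) {ρ ρ' : Dset N B}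
    (hρ' : ρ'.1 = tau N i * ρ.1) :
    coeff k ρ (indT k N q B χ i v).toFinsupp =
      v ρ * coeff k ρ (indAct k N q B χ i ρ).toFinsupp +
        v ρ' * coeff k ρ (indAct k N q B χ i ρ').toFinsupp := by
  rw [coeff_indT]
  refine Finset.sum_eq_add ρ ρ' (ne_of_val_eq_tau_mul hρ') (fun σ _ hσ ↦ ?_)
    (fun h ↦ by rw [Finsupp.notMem_support_iff.mp h, zero_mul])
    (fun h ↦ by rw [Finsupp.notMem_support_iff.mp h, zero_mul])
  have hρσ : ρ.1 ≠ tau N i * σ.1 := fun h ↦ hσ.2 (Subtype.ext (by rw [hρ', h, tau_mul_tau_mul]))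
  rw [coeff_indAct_of_ne hσ.1 hρσ, mul_zero]

lemma coeff_indT_of_len_lt (v : Dset N B →₀ k) {ρ ρ' : Dset N B}
    (hρ' : ρ'.1 = tau N i * ρ.1) (hlt : len N ρ.1 < len N ρ'.1) :
    coeff k ρ (indT k N q B χ i v).toFinsupp = q * v ρ' := by
  have hne : ρ' ≠ ρ := (ne_of_val_eq_tau_mul hρ').symm
  rw [coeff_indT_of_val_eq_tau_mul v hρ', indAct_of_len_lt hρ' hlt,
    indAct_of_len_gt (val_eq_tau_mul_symm hρ') hlt, coeff_single_of_ne hne, map_add, map_smul,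
    map_smul, coeff_single_of_ne hne, coeff_single_self]
  simp only [smul_eq_mul]
  ring

lemma coeff_indT_of_len_gt (v : Dset N B →₀ k) {ρ ρ' : Dset N B}
    (hρ' : ρ'.1 = tau N i * ρ.1) (hgt : len N ρ'.1 < len N ρ.1) :
    coeff k ρ (indT k N q B χ i v).toFinsupp = (q - 1) * v ρ + v ρ' := by
  have hne : ρ' ≠ ρ := (ne_of_val_eq_tau_mul hρ').symm
  rw [coeff_indT_of_val_eq_tau_mul v hρ', indAct_of_len_gt hρ' hgt,
    indAct_of_len_lt (val_eq_tau_mul_symm hρ') hgt, coeff_single_self, map_add, map_smul,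
    map_smul, coeff_single_self, coeff_single_of_ne hne]
  simp only [smul_eq_mul]
  ring

variable (q B χ i) in
def kerGens : Set (IndM k N B) :=
  {v : IndM k N B | ∃ (σ : Dset N B) (h : IsDistL N B (tau N i * σ.1)),
      len N σ.1 < len N (tau N i * σ.1) ∧
      v = Finsupp.single ⟨tau N i * σ.1, h⟩ 1 + Finsupp.single σ 1} ∪
  {v : IndM k N B | ∃ (σ : Dset N B) (j : Fin N), j ∈ B ∧
      σ.1⁻¹ * tau N i * σ.1 = tau N j ∧ χ j = q ∧ v = Finsupp.single σ 1}

lemma single_add_single_mem_kerGens {ρ ρ' : Dset N B} (hρ' : ρ'.1 = tau N i * ρ.1) :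
    (Finsupp.single ρ 1 + Finsupp.single ρ' 1 : Dset N B →₀ k) ∈ kerGens q B χ i := by
  have key : ∀ {σ σ' : Dset N B}, σ'.1 = tau N i * σ.1 → len N σ.1 < len N σ'.1 →
      (Finsupp.single σ' 1 + Finsupp.single σ 1 : Dset N B →₀ k) ∈ kerGens q B χ i := by
    rintro σ ⟨σ', hD⟩ rfl hlt
    exact Or.inl ⟨σ, hD, hlt, rfl⟩
  rcases (len_tau_mul_ne i ρ.1).lt_or_gt with hgt | hlt
  · exact key (val_eq_tau_mul_symm hρ') (hρ' ▸ hgt)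
  · rw [add_comm]
    exact key hρ' (hρ' ▸ hlt)

lemma mem_ker_iff {v : Dset N B →₀ k} :
    v ∈ LinearMap.ker (indT k N q B χ i - q • 1) ↔ (indT k N q B χ i v).toFinsupp = q • v :=
  LinearMap.mem_ker.trans sub_eq_zero

lemma indT_single (σ : Dset N B) (c : k) :
    (indT k N q B χ i (Finsupp.single σ c)).toFinsupp = c • (indAct k N q B χ i σ).toFinsupp :=
  Finsupp.sum_single_index (zero_smul _ _)

lemma indT_add (v w : Dset N B →₀ k) :
    (indT k N q B χ i (v + w)).toFinsupp =
      (indT k N q B χ i v).toFinsupp + (indT k N q B χ i w).toFinsupp :=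
  map_add _ v w

lemma kerGens_subset_ker : kerGens q B χ i ⊆ LinearMap.ker (indT k N q B χ i - q • 1) := by
  rintro _ (⟨σ, hD, hlt, rfl⟩ | ⟨σ, j, hj, hconj, hχj, rfl⟩)
  · set σ' : Dset N B := ⟨_, hD⟩
    have hσ' : σ'.1 = tau N i * σ.1 := rfl
    refine (mem_ker_iff (v := Finsupp.single σ' 1 + Finsupp.single σ 1)).2 ?_
    rw [indT_add, indT_single, indT_single, indAct_of_len_lt hσ' hlt,
      indAct_of_len_gt (val_eq_tau_mul_symm hσ') hlt]
    module
  · refine (mem_ker_iff (v := Finsupp.single σ 1)).2 ?_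
    rw [indT_single, indAct_of_memBi σ hj hconj, hχj, one_smul]

lemma coeff_indT_of_eigen {v : Dset N B →₀ k} (hv : (indT k N q B χ i v).toFinsupp = q • v)
    (ρ : Dset N B) : coeff k ρ (indT k N q B χ i v).toFinsupp = q * v ρ := by
  rw [hv, map_smul, smul_eq_mul]
  rfl

lemma apply_eq_of_val_eq_tau_mul (hq : q ≠ 0) {v : Dset N B →₀ k}
    (hv : (indT k N q B χ i v).toFinsupp = q • v) {ρ ρ' : Dset N B}
    (hρ' : ρ'.1 = tau N i * ρ.1) : v ρ' = v ρ := by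
  have h := coeff_indT_of_eigen hv ρ
  rcases (len_tau_mul_ne i ρ.1).lt_or_gt with hgt | hlt
  · rw [coeff_indT_of_len_gt v hρ' (hρ' ▸ hgt)] at h
    linear_combination h
  · rw [coeff_indT_of_len_lt v hρ' (hρ' ▸ hlt)] at h
    exact mul_left_cancel₀ hq h

lemma exists_mem_kerGens_of_eigen (hq : q ≠ 0) {v : Dset N B →₀ k}
    (hv : (indT k N q B χ i v).toFinsupp = q • v) {ρ : Dset N B} (hρ : v ρ ≠ 0) :
    ∃ g : Dset N B →₀ k, g ∈ kerGens q B χ i ∧ g ρ = 1 ∧ ∀ x, g x ≠ 0 → v x = v ρ * g x := by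
  have hcoeff := coeff_indT_of_eigen hv ρ
  by_cases hB : MemBi N B i ρ.1
  · obtain ⟨j, hj, hconj⟩ := hB
    rw [coeff_indT_of_memBi v ρ hj hconj] at hcoeff
    refine ⟨Finsupp.single ρ 1, Or.inr ⟨ρ, j, hj, hconj, mul_right_cancel₀ hρ hcoeff, rfl⟩,
      Finsupp.single_eq_same, fun x hx ↦ ?_⟩
    obtain rfl := (Finsupp.single_apply_ne_zero.mp hx).1
    rw [Finsupp.single_eq_same, mul_one]
  by_cases hD : IsDistL N B (tau N i * ρ.1)
  · set ρ' : Dset N B := ⟨_, hD⟩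
    have hρ' : ρ'.1 = tau N i * ρ.1 := rfl
    have hne : ρ' ≠ ρ := (ne_of_val_eq_tau_mul hρ').symm
    refine ⟨_, single_add_single_mem_kerGens hρ', by simp [hne], ?_⟩
    intro x hx
    rcases eq_or_ne x ρ with rfl | hxρ
    · simp [hne]
    rcases eq_or_ne x ρ' with rfl | hxρ'
    · simp [hne, apply_eq_of_val_eq_tau_mul hq hv hρ']
    · simp [hxρ.symm, hxρ'.symm] at hx
  · rw [coeff_indT_of_not_isDistL v hB hD] at hcoeff
    exact absurd (mul_eq_zero.mp hcoeff.symm) (not_or.2 ⟨hq, hρ⟩)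

end Induced

theorem ker_Ti_sub_q_of_induced (q : k) (hq : q ≠ 0) (B : Set (Fin N))
    (χ : Fin N → k) (i : Fin N) :
    LinearMap.ker (indT k N q B χ i - q • 1) =
      Submodule.span k
        ({v : IndM k N B | ∃ (σ : Dset N B) (h : IsDistL N B (tau N i * σ.1)),
            len N σ.1 < len N (tau N i * σ.1) ∧
            v = Finsupp.single ⟨tau N i * σ.1, h⟩ 1 + Finsupp.single σ 1} ∪
         {v : IndM k N B | ∃ (σ : Dset N B) (j : Fin N), j ∈ B ∧
            σ.1⁻¹ * tau N i * σ.1 = tau N j ∧ χ j = q ∧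
            v = Finsupp.single σ 1}) :=
  le_antisymm
    (le_span_of_exists_mem_agree kerGens_subset_ker fun _ hv _ hρ ↦
      exists_mem_kerGens_of_eigen hq (mem_ker_iff.1 hv) hρ)
    (Submodule.span_le.2 kerGens_subset_ker)

end
end

section
/- Let S_λ, S_μ be Young subgroups of S_n and S_{1,n-1} the Young subgroup generated by {τ_i : 1 < i < n}. Then the assignment (σ, α) ↦ σα defines a bijection from the set of pairs with α a distinguished S_{1,n-1}-S_λ double coset representative and σ a distinguished S_{μ¹}-S_{1,n-1}-double-coset representative in S_{1,n-1} relative to S_{ν(α)} = S_{1,n-1} ∩ αS_λα^{-1} with trivial intersection S_{μ¹} ∩ σS_{ν(α)}σ^{-1} = e, onto the set of distinguished S_{μ¹}-S_λ double coset representatives π in S_n with S_{μ¹} ∩ πS_λπ^{-1} = e, where S_{μ¹} = S_{1,n-1} ∩ S_μ. -/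
/-!
The length of a permutation is its number of inversions. Inversions that join two `B`-blocks
and whose values lie in two `C`-blocks are carried along by `S_C` on the left and `S_B` on the
right, so their number is a lower bound for the length on `S_C π S_B`; it is attained exactly
when `π` increases on every `B`-block and `π⁻¹` on every `C`-block, which characterises the
distinguished representatives. For such `α`, `S_C ∩ α S_B α⁻¹` is the Young subgroup `S_ν` of
the common refinement of the `C`-blocks and the `α`-images of the `B`-blocks, and for `σ ∈ S_C`
the block conditions on `σ` relative to `(S_D, S_ν)` are exactly those on `σα` relative to
`(S_D, S_B)`; conjugating by `σ ∈ S_C` matches the two triviality conditions. The factorisation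
is unique since `ℓ(πb) = ℓ(π) + ℓ(b)` for `b ∈ S_B` and `π` minimal in `π S_B`. For
`S_C = S_{1,n-1}` it exists: with `q = π⁻¹ 0` the cycle `α = (0 1 … q)` lies in `S_{1,n-1} π`,
and it is distinguished because `q` is the least element of its `B`-block.
-/

noncomputable section

variable (N : ℕ)

/-- `π` is a distinguished (minimal length) representative of the double coset
`H π K`. -/
def IsMinDouble (H K : Subgroup (Equiv.Perm (Fin (N + 1))))
    (π : Equiv.Perm (Fin (N + 1))) : Prop :=
  ∀ a ∈ H, ∀ b ∈ K, len N π ≤ len N (a * π * b)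

/-- The conjugate subgroup `π K π⁻¹`. -/
def conjSub (π : Equiv.Perm (Fin (N + 1))) (K : Subgroup (Equiv.Perm (Fin (N + 1)))) :
    Subgroup (Equiv.Perm (Fin (N + 1))) :=
  Subgroup.map (MulAut.conj π).toMonoidHom K

/-- The Young subgroup `S_{1,n-1}` generated by all basic transpositions except
the first one. -/
def S1 : Subgroup (Equiv.Perm (Fin (N + 1))) :=
  youngSubgroup N {i : Fin N | (i : ℕ) ≠ 0}

namespace Young

open Equiv Finset

variable {N}

/-- `k : Fin N` stands for the gap between positions `k` and `k + 1`, the support of `τ_k`. -/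
def SameBlock (B : Set (Fin N)) (i j : Fin (N + 1)) : Prop :=
  ∀ k : Fin N, min (i : ℕ) j ≤ k → (k : ℕ) < max (i : ℕ) j → k ∈ B

namespace SameBlock

variable {B C : Set (Fin N)} {i j l : Fin (N + 1)}

@[refl] lemma refl (B : Set (Fin N)) (i : Fin (N + 1)) : SameBlock B i i :=
  fun _ h₁ h₂ => by omega

lemma symm (h : SameBlock B i j) : SameBlock B j i :=
  fun k h₁ h₂ => h k (by omega) (by omega)

lemma comm : SameBlock B i j ↔ SameBlock B j i := ⟨symm, symm⟩

lemma trans (h₁ : SameBlock B i j) (h₂ : SameBlock B j l) : SameBlock B i l := fun k _ _ => by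
  by_cases hk : min (i : ℕ) j ≤ k ∧ (k : ℕ) < max (i : ℕ) j
  · exact h₁ k hk.1 hk.2
  · exact h₂ k (by omega) (by omega)

lemma mono (hBC : B ⊆ C) (h : SameBlock B i j) : SameBlock C i j :=
  fun k h₁ h₂ => hBC (h k h₁ h₂)

lemma of_le_of_le {a b c d : Fin (N + 1)} (h : SameBlock B a d) (hab : a ≤ b) (hbc : b ≤ c)
    (hcd : c ≤ d) : SameBlock B b c := by
  rw [Fin.le_def] at hab hbc hcd
  exact fun k h₁ h₂ => h k (by omega) (by omega)

lemma inter : SameBlock (B ∩ C) i j ↔ SameBlock B i j ∧ SameBlock C i j :=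
  ⟨fun h => ⟨h.mono Set.inter_subset_left, h.mono Set.inter_subset_right⟩,
    fun h k h₁ h₂ => ⟨h.1 k h₁ h₂, h.2 k h₁ h₂⟩⟩

lemma castSucc_succ {k : Fin N} : SameBlock B k.castSucc k.succ ↔ k ∈ B := by
  refine ⟨fun h => h k (by simp) (by simp), fun hk k' h₁ h₂ => ?_⟩
  simp only [Fin.val_castSucc, Fin.val_succ] at h₁ h₂
  rwa [show k' = k by omega]

lemma not_empty (h : i < j) : ¬SameBlock ∅ i j := fun hij =>
  hij ⟨i, by omega⟩ (by simp) (by simpa using h)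

lemma nonzero_iff :
    SameBlock {k : Fin N | (k : ℕ) ≠ 0} i j ↔ i = j ∨ (i ≠ 0 ∧ j ≠ 0) := by
  simp only [SameBlock, Set.mem_ofPred_eq, Fin.ext_iff, Fin.val_zero, ne_eq]
  refine ⟨fun h => ?_, fun h k h₁ h₂ => by omega⟩
  by_contra hij
  exact h ⟨0, by omega⟩ (by dsimp only; omega) (by dsimp only; omega) rfl

end SameBlock

lemma lt_of_not_sameBlock {B : Set (Fin N)} {i i' j j' : Fin (N + 1)} (hi : SameBlock B i i')
    (hj : SameBlock B j j') (hij : ¬SameBlock B i j) (h : i < j) : i' < j' := by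
  rw [Fin.lt_def] at h ⊢
  simp only [SameBlock, not_forall] at hij
  obtain ⟨k, hk₁, hk₂, hkB⟩ := hij
  have h₁ : (i' : ℕ) ≤ k := by
    by_contra h'
    exact hkB (hi k (by omega) (by omega))
  have h₂ : (k : ℕ) < j' := by
    by_contra h'
    exact hkB (hj k (by omega) (by omega))
  omega

lemma rel_of_forall_castSucc_succ {r : Fin (N + 1) → Fin (N + 1) → Prop}
    (htrans : ∀ {a b c}, r a b → r b c → r a c) {u v : Fin (N + 1)} (huv : u < v)
    (h : ∀ k : Fin N, (u : ℕ) ≤ k → (k : ℕ) < v → r k.castSucc k.succ) : r u v := by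
  induction v using Fin.induction with
  | zero => exact absurd huv (Fin.not_lt_zero u)
  | succ j ih =>
    rw [Fin.lt_def, Fin.val_succ] at huv
    have hj := h j (by omega) (by simp)
    rcases Nat.lt_or_ge (u : ℕ) j with hu | hu
    · refine htrans (ih hu fun k h₁ h₂ => h k h₁ ?_) hj
      rw [Fin.val_castSucc] at h₂
      rw [Fin.val_succ]
      omega
    · rwa [show u = j.castSucc from Fin.ext (by rw [Fin.val_castSucc]; omega)]

def StrictMonoOnBlocks (B : Set (Fin N)) (π : Perm (Fin (N + 1))) : Prop :=
  ∀ ⦃i j⦄, i < j → SameBlock B i j → π i < π j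

namespace StrictMonoOnBlocks

variable {B : Set (Fin N)} {π : Perm (Fin (N + 1))} {i j : Fin (N + 1)}

lemma le (h : StrictMonoOnBlocks B π) (hij : i ≤ j) (hB : SameBlock B i j) : π i ≤ π j :=
  hij.eq_or_lt.elim (fun e => e ▸ le_rfl) fun hlt => (h hlt hB).le

lemma lt_iff (h : StrictMonoOnBlocks B π) (hB : SameBlock B i j) : π i < π j ↔ i < j :=
  ⟨fun hπ => lt_of_not_ge fun hji => (h.le hji hB.symm).not_gt hπ, fun hij => h hij hB⟩

end StrictMonoOnBlocks

lemma strictMonoOnBlocks_of_forall {B : Set (Fin N)} {π : Perm (Fin (N + 1))}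
    (h : ∀ k ∈ B, π k.castSucc < π k.succ) : StrictMonoOnBlocks B π := fun i j hij hB =>
  rel_of_forall_castSucc_succ (r := fun a b => π a < π b) lt_trans hij fun k h₁ h₂ =>
    h k (hB k (by omega) (by omega))

lemma exists_descent {B : Set (Fin N)} {π : Perm (Fin (N + 1))}
    (h : ¬StrictMonoOnBlocks B π) : ∃ k ∈ B, π k.succ < π k.castSucc := by
  contrapose! h
  exact strictMonoOnBlocks_of_forall fun k hk =>
    (h k hk).lt_of_ne (π.injective.ne (Fin.castSucc_lt_succ (i := k)).ne)

lemma eq_one_of_strictMonoOnBlocks_univ {π : Perm (Fin (N + 1))}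
    (h : StrictMonoOnBlocks Set.univ π) : π = 1 := by
  have hπ : StrictMono π := fun i j hij => h hij fun _ _ _ => trivial
  ext1 x
  exact congrFun ((hπ.range_inj strictMono_id).mp (by simp)) x

def inversions (σ : Perm (Fin (N + 1))) : Finset (Fin (N + 1) × Fin (N + 1)) :=
  univ.filter fun p => p.1 < p.2 ∧ σ p.2 < σ p.1

def invCount (σ : Perm (Fin (N + 1))) : ℕ := #(inversions σ)

section inversions

variable {σ : Perm (Fin (N + 1))} {k : Fin N}

lemma mem_inversions {p : Fin (N + 1) × Fin (N + 1)} :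
    p ∈ inversions σ ↔ p.1 < p.2 ∧ σ p.2 < σ p.1 := by
  simp [inversions]

lemma tau_tau (k : Fin N) (x : Fin (N + 1)) : tau N k (tau N k x) = x :=
  swap_apply_self _ _ _

lemma tau_symm (k : Fin N) : (tau N k).symm = tau N k := symm_swap _ _

lemma tau_inv (k : Fin N) : (tau N k)⁻¹ = tau N k := swap_inv _ _

lemma mul_tau_mul_tau (σ : Perm (Fin (N + 1))) (k : Fin N) : σ * tau N k * tau N k = σ := by
  rw [mul_assoc, tau, swap_mul_self, mul_one]

lemma tau_lt_tau_iff {a b : Fin (N + 1)} : tau N k a < tau N k b ↔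
    (a < b ∧ ¬(a = k.castSucc ∧ b = k.succ)) ∨ (a = k.succ ∧ b = k.castSucc) := by
  simp only [tau, swap_apply_def]
  split_ifs <;> simp only [Fin.lt_def, Fin.ext_iff, Fin.val_castSucc, Fin.val_succ] at * <;>
    omega

lemma invCount_mul_tau_of_lt (h : σ k.castSucc < σ k.succ) :
    invCount (σ * tau N k) = invCount σ + 1 := by
  have hmap : (inversions (σ * tau N k)).map (prodCongr (tau N k) (tau N k)).toEmbedding =
      insert (k.succ, k.castSucc) (inversions σ) := by
    ext ⟨a, b⟩
    simp only [mem_map_equiv, prodCongr_symm, prodCongr_apply, Prod.map, mem_inversions,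
      Perm.mul_apply, tau_symm, tau_tau, mem_insert, Prod.mk.injEq]
    rw [tau_lt_tau_iff]
    constructor
    · rintro ⟨⟨hab, -⟩ | hab, hσ⟩
      · exact Or.inr ⟨hab, hσ⟩
      · exact Or.inl hab
    · rintro (⟨rfl, rfl⟩ | ⟨hab, hσ⟩)
      · exact ⟨Or.inr ⟨rfl, rfl⟩, h⟩
      · refine ⟨Or.inl ⟨hab, ?_⟩, hσ⟩
        rintro ⟨rfl, rfl⟩
        exact lt_asymm h hσ
  rw [invCount, ← card_map, hmap, invCount, card_insert_of_notMem]
  simp [mem_inversions, (Fin.castSucc_lt_succ (i := k)).not_gt]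

lemma invCount_mul_tau_of_gt (h : σ k.succ < σ k.castSucc) :
    invCount (σ * tau N k) + 1 = invCount σ := by
  have hasc : (σ * tau N k) k.castSucc < (σ * tau N k) k.succ := by
    simpa only [Perm.mul_apply, tau, swap_apply_left, swap_apply_right] using h
  rw [← invCount_mul_tau_of_lt hasc, mul_tau_mul_tau]

lemma invCount_mul_tau_le (σ : Perm (Fin (N + 1))) (k : Fin N) :
    invCount (σ * tau N k) ≤ invCount σ + 1 := by
  rcases lt_or_gt_of_ne (σ.injective.ne (Fin.castSucc_lt_succ (i := k)).ne) with h | h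
  · exact (invCount_mul_tau_of_lt h).le
  · have := invCount_mul_tau_of_gt h
    omega

lemma invCount_inv (σ : Perm (Fin (N + 1))) : invCount σ⁻¹ = invCount σ := by
  refine card_nbij' (fun p => (σ⁻¹ p.2, σ⁻¹ p.1)) (fun p => (σ p.2, σ p.1)) ?_ ?_ ?_ ?_
  all_goals intro p hp
  all_goals simp_all [mem_inversions]

lemma invCount_one : invCount (1 : Perm (Fin (N + 1))) = 0 :=
  card_eq_zero.mpr (filter_eq_empty_iff.mpr fun _ _ h => lt_asymm h.1 h.2)

lemma invCount_eq_zero_iff : invCount σ = 0 ↔ σ = 1 := by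
  refine ⟨fun h => ?_, fun h => h ▸ invCount_one⟩
  by_contra hσ
  obtain ⟨k, -, hk⟩ := exists_descent (mt eq_one_of_strictMonoOnBlocks_univ hσ)
  have := invCount_mul_tau_of_gt hk
  omega

lemma induction_on_descent {P : Perm (Fin (N + 1)) → Prop} (one : P 1)
    (step : ∀ σ (k : Fin N), σ k.succ < σ k.castSucc → P (σ * tau N k) → P σ)
    (σ : Perm (Fin (N + 1))) : P σ := by
  induction h : invCount σ using Nat.strong_induction_on generalizing σ with
  | _ n ih =>
    by_cases hσ : σ = 1
    · exact hσ ▸ one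
    obtain ⟨k, -, hk⟩ := exists_descent (mt eq_one_of_strictMonoOnBlocks_univ hσ)
    have := invCount_mul_tau_of_gt hk
    exact step σ k hk (ih _ (by omega) _ rfl)

lemma exists_word (σ : Perm (Fin (N + 1))) :
    ∃ l : List (Fin N), l.length = invCount σ ∧ (l.map (tau N)).prod = σ := by
  induction σ using induction_on_descent with
  | one => exact ⟨[], by simp [invCount_one]⟩
  | step σ k hk ih =>
    obtain ⟨l, hl, hprod⟩ := ih
    refine ⟨l ++ [k], by simp [hl, ← invCount_mul_tau_of_gt hk], ?_⟩
    simp [hprod, mul_tau_mul_tau]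

lemma invCount_prod_le (l : List (Fin N)) : invCount (l.map (tau N)).prod ≤ l.length := by
  induction l using List.reverseRecOn with
  | nil => simp [invCount_eq_zero_iff]
  | append_singleton l k ih =>
    simpa using (invCount_mul_tau_le _ k).trans (by omega)

theorem len_eq_invCount (σ : Perm (Fin (N + 1))) : len N σ = invCount σ := by
  obtain ⟨l, hl, hprod⟩ := exists_word σ
  refine le_antisymm (Nat.sInf_le ⟨l, hl, hprod⟩) ?_
  have hne : {m | ∃ l : List (Fin N), l.length = m ∧ (l.map (tau N)).prod = σ}.Nonempty :=
    ⟨_, l, hl, hprod⟩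
  obtain ⟨l', hl', hprod'⟩ := Nat.sInf_mem hne
  rw [len, ← hl', ← hprod']
  exact invCount_prod_le l'

end inversions

section youngSubgroup

variable {B C : Set (Fin N)} {σ b : Perm (Fin (N + 1))} {k : Fin N}

lemma tau_mem_youngSubgroup (hk : k ∈ B) : tau N k ∈ youngSubgroup N B :=
  Subgroup.subset_closure ⟨k, hk, rfl⟩

lemma sameBlock_tau (hk : k ∈ B) (x : Fin (N + 1)) : SameBlock B x (tau N k x) := by
  rw [tau, swap_apply_def]
  split_ifs with h₁ h₂
  · exact h₁ ▸ SameBlock.castSucc_succ.mpr hk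
  · exact h₂ ▸ (SameBlock.castSucc_succ.mpr hk).symm
  · exact SameBlock.refl B x

theorem mem_youngSubgroup_iff : σ ∈ youngSubgroup N B ↔ ∀ i, SameBlock B i (σ i) := by
  refine ⟨fun h => ?_, fun h => ?_⟩
  · induction h using Subgroup.closure_induction with
    | mem x hx =>
      obtain ⟨k, hk, rfl⟩ := hx
      exact sameBlock_tau hk
    | one => exact SameBlock.refl B
    | mul x y _ _ hx hy => exact fun i => (hy i).trans (hx (y i))
    | inv x _ hx => exact fun i => by simpa using (hx (x⁻¹ i)).symm
  · induction σ using induction_on_descent with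
    | one => exact one_mem _
    | step σ k hk ih =>
      have hkB : k ∈ B := by
        by_contra hkB
        exact lt_asymm hk (lt_of_not_sameBlock (h _) (h _)
          (mt SameBlock.castSucc_succ.mp hkB) Fin.castSucc_lt_succ)
      have := mul_mem (ih fun i => (sameBlock_tau hkB i).trans (h _)) (tau_mem_youngSubgroup hkB)
      rwa [mul_tau_mul_tau] at this

lemma sameBlock_apply_iff (hb : b ∈ youngSubgroup N B) {i j : Fin (N + 1)} :
    SameBlock B (b i) (b j) ↔ SameBlock B i j :=
  have hbB := mem_youngSubgroup_iff.mp hb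
  ⟨fun h => ((hbB i).trans h).trans (hbB j).symm, fun h => ((hbB i).symm.trans h).trans (hbB j)⟩

lemma apply_lt_apply_of_not_sameBlock (hb : b ∈ youngSubgroup N B) {i j : Fin (N + 1)}
    (hB : ¬SameBlock B i j) (hij : i < j) : b i < b j :=
  lt_of_not_sameBlock (mem_youngSubgroup_iff.mp hb i) (mem_youngSubgroup_iff.mp hb j) hB hij

lemma youngSubgroup_inf (B C : Set (Fin N)) :
    youngSubgroup N B ⊓ youngSubgroup N C = youngSubgroup N (B ∩ C) := by
  ext σ
  simp only [Subgroup.mem_inf, mem_youngSubgroup_iff, SameBlock.inter, forall_and]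

lemma mem_S1_iff : σ ∈ S1 N ↔ σ 0 = 0 := by
  simp only [S1, mem_youngSubgroup_iff, SameBlock.nonzero_iff]
  refine ⟨fun h => ?_, fun h i => ?_⟩
  · rcases h 0 with h0 | h0
    · exact h0.symm
    · exact absurd rfl h0.1
  · by_cases hi : i = 0
    · exact Or.inl (by rw [hi, h])
    · exact Or.inr ⟨hi, fun h' => hi (σ.injective (h'.trans h.symm))⟩

end youngSubgroup

section crossInversions

open scoped Classical

variable {B C : Set (Fin N)} {σ π a b : Perm (Fin (N + 1))}

lemma filter_sameBlock_inversions_mul (hπ : StrictMonoOnBlocks B π)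
    (hb : b ∈ youngSubgroup N B) :
    (inversions (π * b)).filter (fun p => SameBlock B p.1 p.2) = inversions b := by
  ext ⟨i, j⟩
  simp only [mem_filter, mem_inversions, Perm.mul_apply]
  constructor
  · rintro ⟨⟨hij, hπij⟩, hB⟩
    exact ⟨hij, (hπ.lt_iff ((sameBlock_apply_iff hb).mpr hB.symm)).mp hπij⟩
  · rintro ⟨hij, hbij⟩
    have hB : SameBlock B i j := by_contra fun hB =>
      lt_asymm hbij (apply_lt_apply_of_not_sameBlock hb hB hij)
    exact ⟨⟨hij, hπ hbij ((sameBlock_apply_iff hb).mpr hB.symm)⟩, hB⟩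

def crossInversions (C B : Set (Fin N)) (σ : Perm (Fin (N + 1))) :
    Finset (Fin (N + 1) × Fin (N + 1)) :=
  (inversions σ).filter fun p => ¬SameBlock B p.1 p.2 ∧ ¬SameBlock C (σ p.1) (σ p.2)

lemma mapsTo_crossInversions_mul (hb : b ∈ youngSubgroup N B) :
    Set.MapsTo (fun p : Fin (N + 1) × Fin (N + 1) => (b p.1, b p.2))
      (crossInversions C B (σ * b) : Set _) (crossInversions C B σ) := by
  rintro ⟨i, j⟩ hp
  rw [mem_coe, crossInversions, mem_filter] at hp ⊢
  simp only [mem_inversions, Perm.mul_apply] at hp ⊢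
  obtain ⟨⟨hij, hσ⟩, hB, hC⟩ := hp
  exact ⟨⟨apply_lt_apply_of_not_sameBlock hb hB hij, hσ⟩, (sameBlock_apply_iff hb).not.mpr hB,
    hC⟩

lemma card_crossInversions_mul_right (hb : b ∈ youngSubgroup N B) :
    #(crossInversions C B (σ * b)) = #(crossInversions C B σ) := by
  have hinv := mapsTo_crossInversions_mul (C := C) (σ := σ * b) (inv_mem hb)
  rw [mul_inv_cancel_right] at hinv
  exact card_nbij' _ _ (mapsTo_crossInversions_mul hb) hinv (fun _ _ => by simp)
    (fun _ _ => by simp)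

lemma card_crossInversions_inv :
    #(crossInversions B C σ⁻¹) = #(crossInversions C B σ) := by
  refine card_nbij' (fun p => (σ⁻¹ p.2, σ⁻¹ p.1)) (fun p => (σ p.2, σ p.1)) ?_ ?_ ?_ ?_
  all_goals intro p hp
  all_goals simp_all [crossInversions, mem_inversions, SameBlock.comm]

lemma card_crossInversions_mul_left (ha : a ∈ youngSubgroup N C) :
    #(crossInversions C B (a * σ)) = #(crossInversions C B σ) := by
  rw [← card_crossInversions_inv, mul_inv_rev, card_crossInversions_mul_right (inv_mem ha),
    card_crossInversions_inv]

lemma card_crossInversions_of_strictMonoOnBlocks (hB : StrictMonoOnBlocks B π)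
    (hC : StrictMonoOnBlocks C π⁻¹) : #(crossInversions C B π) = invCount π := by
  rw [crossInversions, filter_true_of_mem, invCount]
  rintro ⟨i, j⟩ hp
  rw [mem_inversions] at hp
  refine ⟨fun h => lt_asymm hp.2 (hB hp.1 h), fun h => lt_asymm hp.1 ?_⟩
  simpa using hC hp.2 h.symm

lemma crossInversions_empty :
    crossInversions ∅ B σ = (inversions σ).filter fun p => ¬SameBlock B p.1 p.2 :=
  filter_congr fun _ hp =>
    and_iff_left fun h => SameBlock.not_empty (mem_inversions.mp hp).2 h.symm

theorem invCount_mul_of_strictMonoOnBlocks (hπ : StrictMonoOnBlocks B π)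
    (hb : b ∈ youngSubgroup N B) : invCount (π * b) = invCount π + invCount b := by
  have hcross : #((inversions (π * b)).filter fun p => ¬SameBlock B p.1 p.2) = invCount π := by
    rw [← crossInversions_empty, card_crossInversions_mul_right hb,
      card_crossInversions_of_strictMonoOnBlocks hπ fun _ _ h hB => (SameBlock.not_empty h hB).elim]
  rw [invCount, ← card_filter_add_card_filter_not (fun p => SameBlock B p.1 p.2),
    filter_sameBlock_inversions_mul hπ hb, hcross, add_comm]
  rfl

lemma eq_one_of_strictMonoOnBlocks_mul (hπ : StrictMonoOnBlocks B π)
    (hπb : StrictMonoOnBlocks B (π * b)) (hb : b ∈ youngSubgroup N B) : b = 1 := by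
  have h₁ := invCount_mul_of_strictMonoOnBlocks hπ hb
  have h₂ := invCount_mul_of_strictMonoOnBlocks hπb (inv_mem hb)
  rw [mul_inv_cancel_right, invCount_inv] at h₂
  exact invCount_eq_zero_iff.mp (by omega)

theorem isMinDouble_iff : IsMinDouble N (youngSubgroup N C) (youngSubgroup N B) π ↔
    StrictMonoOnBlocks B π ∧ StrictMonoOnBlocks C π⁻¹ := by
  simp only [IsMinDouble, len_eq_invCount]
  refine ⟨fun h => ⟨?_, ?_⟩, fun ⟨hB, hC⟩ a ha b hb => ?_⟩
  · by_contra hB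
    obtain ⟨k, hk, hdesc⟩ := exists_descent hB
    have := h 1 (one_mem _) _ (tau_mem_youngSubgroup hk)
    rw [one_mul] at this
    have := invCount_mul_tau_of_gt hdesc
    omega
  · by_contra hC
    obtain ⟨k, hk, hdesc⟩ := exists_descent hC
    have := h _ (tau_mem_youngSubgroup hk) 1 (one_mem _)
    rw [mul_one, ← invCount_inv (tau N k * π), mul_inv_rev, tau_inv] at this
    have := invCount_mul_tau_of_gt hdesc
    have := invCount_inv π
    omega
  · calc invCount π = #(crossInversions C B π) :=
          (card_crossInversions_of_strictMonoOnBlocks hB hC).symm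
      _ = #(crossInversions C B (a * π * b)) := by
          rw [card_crossInversions_mul_right hb, card_crossInversions_mul_left ha]
      _ ≤ invCount (a * π * b) := card_filter_le _ _

end crossInversions

section mackey

variable {B C D : Set (Fin N)} {σ σ' α α' : Perm (Fin (N + 1))}

/-- The composition `ν(α)` of the paper. -/
def nu (C B : Set (Fin N)) (α : Perm (Fin (N + 1))) : Set (Fin N) :=
  {k | k ∈ C ∧ SameBlock B (α⁻¹ k.castSucc) (α⁻¹ k.succ)}

lemma sameBlock_nu_iff (hα : StrictMonoOnBlocks C α⁻¹) {u v : Fin (N + 1)} :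
    SameBlock (nu C B α) u v ↔ SameBlock C u v ∧ SameBlock B (α⁻¹ u) (α⁻¹ v) := by
  wlog huv : u ≤ v generalizing u v
  · simpa only [SameBlock.comm (i := u), SameBlock.comm (i := α⁻¹ u)] using
      this (le_of_not_ge huv)
  rw [Fin.le_def] at huv
  refine ⟨fun h => ⟨h.mono fun k hk => hk.1, ?_⟩, fun ⟨hC, hB⟩ k h₁ h₂ => ⟨hC k h₁ h₂, ?_⟩⟩
  · rcases huv.eq_or_lt with huv | huv
    · rw [Fin.ext huv]
    · exact rel_of_forall_castSucc_succ (r := fun a b => SameBlock B (α⁻¹ a) (α⁻¹ b))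
        SameBlock.trans huv fun k h₁ h₂ => (h k (by omega) (by omega)).2
  · have hu : u ≤ k.castSucc := by rw [Fin.le_def, Fin.val_castSucc]; omega
    have hv : k.succ ≤ v := by rw [Fin.le_def, Fin.val_succ]; omega
    have hk : k.castSucc ≤ k.succ := Fin.castSucc_lt_succ.le
    exact hB.of_le_of_le (hα.le hu (hC.of_le_of_le le_rfl hu (hk.trans hv)))
      (hα.le hk (hC.of_le_of_le hu hk hv))
      (hα.le hv (hC.of_le_of_le (hu.trans hk) hv le_rfl))

lemma mem_conjSub {π γ : Perm (Fin (N + 1))} {K : Subgroup (Perm (Fin (N + 1)))} :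
    γ ∈ conjSub N π K ↔ π⁻¹ * γ * π ∈ K := by
  rw [conjSub, Subgroup.mem_map_equiv, MulAut.conj_symm_apply]

theorem youngSubgroup_inf_conjSub (hα : StrictMonoOnBlocks C α⁻¹) :
    youngSubgroup N C ⊓ conjSub N α (youngSubgroup N B) = youngSubgroup N (nu C B α) := by
  ext γ
  simp only [Subgroup.mem_inf, mem_conjSub, mem_youngSubgroup_iff, sameBlock_nu_iff hα,
    forall_and, Perm.mul_apply]
  exact and_congr_right fun _ =>
    ⟨fun h i => by simpa using h (α⁻¹ i), fun h i => by simpa using h (α i)⟩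

lemma strictMonoOnBlocks_mul_iff (hσ : σ ∈ youngSubgroup N C) (hα : StrictMonoOnBlocks B α)
    (hα' : StrictMonoOnBlocks C α⁻¹) :
    StrictMonoOnBlocks B (σ * α) ↔ StrictMonoOnBlocks (nu C B α) σ := by
  refine ⟨fun h u v huv hν => ?_, fun h i j hij hB => ?_⟩
  · obtain ⟨hC, hB⟩ := (sameBlock_nu_iff hα').mp hν
    simpa using h (hα' huv hC) hB
  · rw [Perm.mul_apply, Perm.mul_apply]
    by_cases hC : SameBlock C (α i) (α j)
    · exact h (hα hij hB) ((sameBlock_nu_iff hα').mpr ⟨hC, by simpa using hB⟩)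
    · exact apply_lt_apply_of_not_sameBlock hσ hC (hα hij hB)

lemma strictMonoOnBlocks_inv_mul_iff (hD : D ⊆ C) (hσ : σ ∈ youngSubgroup N C)
    (hα' : StrictMonoOnBlocks C α⁻¹) :
    StrictMonoOnBlocks D (σ * α)⁻¹ ↔ StrictMonoOnBlocks D σ⁻¹ := by
  have hC {u v} (h : SameBlock D u v) : SameBlock C (σ⁻¹ u) (σ⁻¹ v) :=
    (sameBlock_apply_iff (inv_mem hσ)).mpr (h.mono hD)
  simp only [StrictMonoOnBlocks, mul_inv_rev, Perm.mul_apply]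
  exact ⟨fun h u v huv hB => (hα'.lt_iff (hC hB)).mp (h huv hB),
    fun h u v huv hB => hα' (h huv hB) (hC hB)⟩

theorem isMinDouble_inf_conjSub_iff
    (hα : IsMinDouble N (youngSubgroup N C) (youngSubgroup N B) α)
    (hσ : σ ∈ youngSubgroup N C) (hD : D ⊆ C) :
    IsMinDouble N (youngSubgroup N D)
        (youngSubgroup N C ⊓ conjSub N α (youngSubgroup N B)) σ ↔
      IsMinDouble N (youngSubgroup N D) (youngSubgroup N B) (σ * α) := by
  obtain ⟨hαB, hαC⟩ := isMinDouble_iff.mp hα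
  rw [youngSubgroup_inf_conjSub hαC, isMinDouble_iff, isMinDouble_iff,
    strictMonoOnBlocks_mul_iff hσ hαB hαC, strictMonoOnBlocks_inv_mul_iff hD hσ hαC]

lemma eq_and_eq_of_mul_eq_mul (hα : StrictMonoOnBlocks C α⁻¹)
    (hα' : StrictMonoOnBlocks C α'⁻¹)
    (hσ : σ ∈ youngSubgroup N C) (hσ' : σ' ∈ youngSubgroup N C) (h : σ * α = σ' * α') :
    σ = σ' ∧ α = α' := by
  have hc : σ'⁻¹ * σ ∈ youngSubgroup N C := mul_mem (inv_mem hσ') hσ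
  have hα'c : α' = σ'⁻¹ * σ * α := by rw [mul_assoc, h, inv_mul_cancel_left]
  have hc1 : (σ'⁻¹ * σ)⁻¹ = 1 :=
    eq_one_of_strictMonoOnBlocks_mul hα (by rwa [hα'c, mul_inv_rev] at hα') (inv_mem hc)
  obtain rfl : σ' = σ := inv_mul_eq_one.mp (inv_eq_one.mp hc1)
  exact ⟨rfl, mul_left_cancel h⟩

lemma inf_conjSub_inf_conjSub {S H K : Subgroup (Perm (Fin (N + 1)))} (hσ : σ ∈ S)
    (hH : H ≤ S) : H ⊓ conjSub N σ (S ⊓ conjSub N α K) = H ⊓ conjSub N (σ * α) K := by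
  ext γ
  simp only [Subgroup.mem_inf, mem_conjSub, mul_inv_rev, ← mul_assoc]
  exact and_congr_right fun hγ =>
    and_iff_right (S.mul_mem (S.mul_mem (S.inv_mem hσ) (hH hγ)) hσ)

end mackey

section cycleRange

lemma strictMonoOnBlocks_cycleRange_inv (q : Fin (N + 1)) :
    StrictMonoOnBlocks {k : Fin N | (k : ℕ) ≠ 0} (Fin.cycleRange q)⁻¹ := by
  intro u v huv hB
  rcases SameBlock.nonzero_iff.mp hB with rfl | ⟨hu, hv⟩
  · exact absurd huv (lt_irrefl _)
  obtain ⟨u, rfl⟩ := Fin.exists_succ_eq.mpr hu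
  obtain ⟨v, rfl⟩ := Fin.exists_succ_eq.mpr hv
  simpa [Perm.inv_def] using Fin.strictMono_succAbove q (Fin.succ_lt_succ_iff.mp huv)

lemma strictMonoOnBlocks_cycleRange {B : Set (Fin N)} {q : Fin (N + 1)}
    (hq : ∀ i < q, ¬SameBlock B i q) : StrictMonoOnBlocks B (Fin.cycleRange q) := by
  intro i j hij hB
  have hne {x} (hx : x ≠ q) : Fin.cycleRange q x ≠ 0 := by
    rw [← Fin.cycleRange_self q]
    exact (Fin.cycleRange q).injective.ne hx
  have hj : j ≠ q := by
    rintro rfl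
    exact hq i hij hB
  rcases eq_or_ne i q with rfl | hi
  · rw [Fin.cycleRange_self]
    exact Fin.pos_iff_ne_zero.mpr (hne hj)
  · refine ((strictMonoOnBlocks_cycleRange_inv q).lt_iff
      (SameBlock.nonzero_iff.mpr (Or.inr ⟨hne hi, hne hj⟩))).mp ?_
    simpa using hij

theorem exists_isMinDouble_S1_mul_inv_mem {B : Set (Fin N)} {π : Perm (Fin (N + 1))}
    (hπ : StrictMonoOnBlocks B π) :
    ∃ α, IsMinDouble N (S1 N) (youngSubgroup N B) α ∧ π * α⁻¹ ∈ S1 N := by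
  have hq : ∀ i < π⁻¹ 0, ¬SameBlock B i (π⁻¹ 0) := fun i hi hB => by
    simpa using hπ hi hB
  exact ⟨Fin.cycleRange (π⁻¹ 0),
    isMinDouble_iff.mpr ⟨strictMonoOnBlocks_cycleRange hq, strictMonoOnBlocks_cycleRange_inv _⟩,
    mem_S1_iff.mpr (by simp [Perm.inv_def])⟩

end cycleRange

end Young

open Young

/-- Mackey decomposition of double coset representatives:
for Young subgroups `S_λ, S_μ` of `S_n` and `S_{μ¹} = S_{1,n-1} ∩ S_μ`, the map
`(σ, α) ↦ σ α` is a bijection from the set of pairs with `α` a distinguished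
`S_{1,n-1}`-`S_λ` double coset representative and `σ ∈ S_{1,n-1}` a
distinguished `S_{μ¹}`-`S_{ν(α)}` double coset representative
(`S_{ν(α)} = S_{1,n-1} ∩ α S_λ α⁻¹`) with `S_{μ¹} ∩ σ S_{ν(α)} σ⁻¹ = e`,
onto the set of distinguished `S_{μ¹}`-`S_λ` double coset representatives `π`
with `S_{μ¹} ∩ π S_λ π⁻¹ = e`. -/
theorem mackey_double_coset_bijection (Bl Bm : Set (Fin N)) :
    Set.BijOn (fun p : Equiv.Perm (Fin (N + 1)) × Equiv.Perm (Fin (N + 1)) => p.1 * p.2)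
      {p | IsMinDouble N (S1 N) (youngSubgroup N Bl) p.2 ∧
           p.1 ∈ S1 N ∧
           IsMinDouble N (S1 N ⊓ youngSubgroup N Bm)
             (S1 N ⊓ conjSub N p.2 (youngSubgroup N Bl)) p.1 ∧
           (S1 N ⊓ youngSubgroup N Bm) ⊓
             conjSub N p.1 (S1 N ⊓ conjSub N p.2 (youngSubgroup N Bl)) = ⊥}
      {π | IsMinDouble N (S1 N ⊓ youngSubgroup N Bm) (youngSubgroup N Bl) π ∧
           (S1 N ⊓ youngSubgroup N Bm) ⊓ conjSub N π (youngSubgroup N Bl) = ⊥} := by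
  have hH : S1 N ⊓ youngSubgroup N Bm = youngSubgroup N ({i : Fin N | (i : ℕ) ≠ 0} ∩ Bm) :=
    youngSubgroup_inf _ _
  have hHS : S1 N ⊓ youngSubgroup N Bm ≤ S1 N := inf_le_left
  have hD : {i : Fin N | (i : ℕ) ≠ 0} ∩ Bm ⊆ {i | (i : ℕ) ≠ 0} := Set.inter_subset_left
  rw [hH] at hHS ⊢
  refine ⟨?_, ?_, ?_⟩
  · rintro ⟨σ, α⟩ ⟨hα, hσ, hσmin, htriv⟩
    exact ⟨(isMinDouble_inf_conjSub_iff hα hσ hD).mp hσmin,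
      by rwa [← inf_conjSub_inf_conjSub hσ hHS]⟩
  · rintro ⟨σ, α⟩ ⟨hα, hσ, -⟩ ⟨σ', α'⟩ ⟨hα', hσ', -⟩ h
    exact Prod.ext_iff.mpr (eq_and_eq_of_mul_eq_mul (isMinDouble_iff.mp hα).2
      (isMinDouble_iff.mp hα').2 hσ hσ' h)
  · rintro π ⟨hπ, htriv⟩
    obtain ⟨α, hα, hσ⟩ := exists_isMinDouble_S1_mul_inv_mem (isMinDouble_iff.mp hπ).1
    refine ⟨(π * α⁻¹, α), ⟨hα, hσ, (isMinDouble_inf_conjSub_iff hα hσ hD).mpr ?_, ?_⟩,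
      inv_mul_cancel_right π α⟩
    · rwa [inv_mul_cancel_right]
    · rwa [inf_conjSub_inf_conjSub hσ hHS, inv_mul_cancel_right]

end
end
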